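/- Sum-rate converse for SMDC under the weakened sliding-window reconstruction requirement: Let L ≥ 1, let S_1,…,S_L be mutually independent random variables each taking values in a finite set, let X_1,…,X_L be random variables jointly distributed with them (each taking values in a finite set), and let δ_1,…,δ_L ≥ 0. Suppose that for every α ∈ {1,…,L} and every l ∈ {1,…,L}, H(S_1,…,S_α | X_{W_l^{(α)}}) ≤ δ_α. Then (1/L) · ∑_{l=1}^{L} H(X_l) ≥ ∑_{α=1}^{L} H(S_α)/α − ∑_{α=1}^{L} δ_α/α. -/

import Mathlib

open MeasureTheory ProbabilityTheory

noncomputable def entH {Ω : Type*} [MeasurableSpace Ω] (μ : Measure Ω)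
    {S : Type*} [Fintype S] (X : Ω → S) : ℝ :=
  ∑ s : S, Real.negMulLog ((μ (X ⁻¹' {s})).toReal)

noncomputable def condEntH {Ω : Type*} [MeasurableSpace Ω] (μ : Measure Ω)
    {S T : Type*} [Fintype S] [Fintype T] (X : Ω → S) (Y : Ω → T) : ℝ :=
  entH μ (fun ω => (X ω, Y ω)) - entH μ Y

def jointOn {Ω : Type*} {ι : Type*} {S : ι → Type*} (X : ∀ i, Ω → S i) (U : Finset ι) :
    Ω → ((i : U) → S i) := fun ω i => X i ω

noncomputable def entHset {Ω : Type*} [MeasurableSpace Ω] (μ : Measure Ω)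
    {ι : Type*} [DecidableEq ι] {S : ι → Type*} [∀ i, Fintype (S i)]
    (X : ∀ i, Ω → S i) (U : Finset ι) : ℝ :=
  entH μ (jointOn X U)

noncomputable def condEntHset {Ω : Type*} [MeasurableSpace Ω] (μ : Measure Ω)
    {ι : Type*} [DecidableEq ι] {S : ι → Type*} [∀ i, Fintype (S i)]
    (X : ∀ i, Ω → S i) (U A : Finset ι) : ℝ :=
  condEntH μ (jointOn X U) (jointOn X A)

/-- The sliding window `W_l^{(α)}` (0-indexed: `{⟨l+k⟩ : k < α}` with indices mod `L`). -/
def win (L : ℕ) (l : Fin L) (α : ℕ) : Finset (Fin L) :=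
  (Finset.range α).image (fun k => (⟨((l : ℕ) + k) % L, Nat.mod_lt _ l.pos⟩ : Fin L))

/-- The first `α` indices `{0, …, α−1}` of `Fin L` (corresponding to the sources
`S_1, …, S_α` of the paper). -/
def pre (L : ℕ) (α : ℕ) : Finset (Fin L) :=
  Finset.univ.filter (fun i : Fin L => (i : ℕ) < α)

/-!
Write `a α = (∑_l H(X_{W_l^{(α+1)}} | S_1, …, S_α)) / (α + 1)`. A window of size `α + 1` almost
determines `S_1, …, S_{α+1}` and `S_{α+1}` is independent of `S_1, …, S_α`, so conditioning each
summand additionally on `S_{α+1}` lowers it by at least `H(S_{α+1}) − δ_{α+1}`. A sliding-window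
form of Han's inequality brings the result back to windows of size `α + 2` at the cost of the
factor `(α + 1)/(α + 2)`: by the chain rule, `∑_l H(X_{W_l^{(β)}} | Z)` is the sum over `γ < β` of
the increments `∑_l H(X_{⟨l+γ⟩} | X_{W_l^{(γ)}}, Z)`, which are nonincreasing in `γ` because
conditioning reduces entropy and `W_{l+1}^{(γ)} ⊆ W_l^{(γ+1)}`. Together,
`a α − a (α+1) ≥ L (H(S_{α+1}) − δ_{α+1}) / (α + 1)`, and telescoping from `a 0 = ∑_l H(X_l)` to
`a L ≥ 0` gives the bound.
-/

open Finset Function Real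

lemma negMulLog_sum_le {ι : Type*} (s : Finset ι) {f : ι → ℝ} (hf : ∀ i ∈ s, 0 ≤ f i) :
    negMulLog (∑ i ∈ s, f i) ≤ ∑ i ∈ s, negMulLog (f i) := by
  rw [negMulLog, neg_mul, sum_mul, ← sum_neg_distrib]
  refine sum_le_sum fun i hi => ?_
  rw [negMulLog, neg_mul, neg_le_neg_iff]
  rcases (hf i hi).eq_or_lt with h | h
  · simp [← h]
  · exact mul_le_mul_of_nonneg_left (log_le_log h (single_le_sum hf hi)) h.le

lemma mul_log_div_le_sub {m x : ℝ} (hm : 0 ≤ m) (hx : 0 < x) : m * log (x / m) ≤ x - m := by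
  rcases hm.eq_or_lt with rfl | hm
  · simpa using hx.le
  calc m * log (x / m) ≤ m * (x / m - 1) :=
        mul_le_mul_of_nonneg_left (log_le_sub_one_of_pos (div_pos hx hm)) hm.le
    _ = x - m := by field_simp

lemma mul_log_add_log_sub_le {m r s t : ℝ} (hm : 0 ≤ m) (hr : m ≤ r) (hs : m ≤ s) (ht : 0 < t) :
    m * (log r + log s) - m * log m - m * log t ≤ r * s / t - m := by
  rcases hm.eq_or_lt with rfl | hm
  · simpa using div_nonneg (mul_nonneg hr hs) ht.le
  have hr' := hm.trans_le hr
  have hs' := hm.trans_le hs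
  have := mul_log_div_le_sub hm.le (by positivity : 0 < r * s / t)
  rw [log_div (by positivity) hm.ne', log_div (by positivity) ht.ne',
    log_mul hr'.ne' hs'.ne'] at this
  linarith

lemma sum_negMulLog_add_negMulLog_sum_le {A B : Type*} [Fintype A] [Fintype B] (m : A → B → ℝ)
    (hm : ∀ a b, 0 ≤ m a b) :
    ∑ a, ∑ b, negMulLog (m a b) + negMulLog (∑ a, ∑ b, m a b) ≤
      ∑ a, negMulLog (∑ b, m a b) + ∑ b, negMulLog (∑ a, m a b) := by
  set t := ∑ a, ∑ b, m a b with ht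
  have hr : ∀ a b, m a b ≤ ∑ b', m a b' := fun a b =>
    single_le_sum (fun b _ => hm a b) (mem_univ b)
  have hs : ∀ a b, m a b ≤ ∑ a', m a' b := fun a b =>
    single_le_sum (fun a _ => hm a b) (mem_univ a)
  rcases (sum_nonneg fun a _ => sum_nonneg fun b _ => hm a b : 0 ≤ t).eq_or_lt with h0 | htpos
  · have hzero : ∀ a b, m a b = 0 := fun a b =>
      (sum_eq_zero_iff_of_nonneg fun b _ => hm a b).1
        ((sum_eq_zero_iff_of_nonneg fun a _ => sum_nonneg fun b _ => hm a b).1 h0.symm a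
          (mem_univ a)) b (mem_univ b)
    simp [ht, hzero]
  have e1 : ∑ a, ∑ b, m a b * log (∑ b', m a b') = ∑ a, (∑ b, m a b) * log (∑ b, m a b) := by
    simp only [sum_mul]
  have e2 : ∑ a, ∑ b, m a b * log (∑ a', m a' b) = ∑ b, (∑ a, m a b) * log (∑ a, m a b) := by
    rw [sum_comm]
    simp only [sum_mul]
  have e3 : ∑ a, ∑ b, m a b * log t = t * log t := by simp only [ht, sum_mul]
  have e4 : ∑ a, ∑ b, (∑ b', m a b') * (∑ a', m a' b) / t = t := by
    simp_rw [← sum_div, ← sum_mul_sum]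
    rw [← ht, sum_comm, ← ht]
    field_simp
  -- Gibbs' bound `m log (r s / (m t)) ≤ r s / t - m`, whose right-hand sides sum to `t - t`.
  have hsum := sum_le_sum fun a (_ : a ∈ univ) => sum_le_sum fun b (_ : b ∈ univ) =>
    mul_log_add_log_sub_le (t := t) (hm a b) (hr a b) (hs a b) htpos
  simp only [sum_sub_distrib, mul_add, sum_add_distrib, e1, e2, e3, e4] at hsum
  simp only [negMulLog, neg_mul, sum_neg_distrib]
  linarith

theorem Antitone.mul_sum_range_succ_le {D : ℕ → ℝ} (hD : Antitone D) (n : ℕ) :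
    (n + 1 : ℝ) * ∑ γ ∈ range (n + 2), D γ ≤ (n + 2) * ∑ γ ∈ range (n + 1), D γ := by
  have h := card_nsmul_le_sum (range (n + 1)) D (D (n + 1))
    fun γ hγ => hD (by simp at hγ; omega)
  rw [card_range, nsmul_eq_mul] at h
  push_cast at h
  rw [sum_range_succ _ (n + 1)]
  linarith

section Entropy

variable {Ω : Type*} [MeasurableSpace Ω] {μ : Measure Ω}
  {A B C : Type*} [Fintype A] [Fintype B] [Fintype C]

lemma entH_eq_sum_measureReal (X : Ω → A) :
    entH μ X = ∑ a, negMulLog (μ.real (X ⁻¹' {a})) := rfl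

lemma entH_comp_of_injective (X : Ω → A) {f : A → B} (hf : Injective f) :
    entH μ (fun ω => f (X ω)) = entH μ X := by
  refine (Fintype.sum_of_injective f hf _ _ (fun b hb => ?_) fun a => ?_).symm
  · have : (fun ω => f (X ω)) ⁻¹' {b} = ∅ :=
      Set.eq_empty_of_forall_notMem fun ω hω => hb ⟨X ω, hω⟩
    simp [this]
  · congr 3
    ext ω
    simp [hf.eq_iff]

lemma condEntH_comp_left_of_injective (X : Ω → A) (Y : Ω → C) {f : A → B} (hf : Injective f) :
    condEntH μ (fun ω => f (X ω)) Y = condEntH μ X Y := by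
  rw [condEntH, condEntH,
    ← entH_comp_of_injective (fun ω => (X ω, Y ω)) (hf.prodMap injective_id)]
  rfl

lemma condEntH_comp_right_of_injective (X : Ω → C) (Y : Ω → A) {f : A → B} (hf : Injective f) :
    condEntH μ X (fun ω => f (Y ω)) = condEntH μ X Y := by
  rw [condEntH, condEntH, entH_comp_of_injective Y hf,
    ← entH_comp_of_injective (fun ω => (X ω, Y ω)) (injective_id.prodMap hf)]
  rfl

lemma entH_of_subsingleton [IsProbabilityMeasure μ] [Subsingleton A] (X : Ω → A) :
    entH μ X = 0 := by
  rw [← entH_comp_of_injective X (injective_of_subsingleton fun _ => ())]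
  simp [entH]

lemma condEntH_of_subsingleton_left [Subsingleton A] (X : Ω → A) (Y : Ω → B) :
    condEntH μ X Y = 0 :=
  sub_eq_zero.2 (entH_comp_of_injective (fun ω => (X ω, Y ω)) Prod.snd_injective).symm

lemma condEntH_of_subsingleton_right [IsProbabilityMeasure μ] [Subsingleton B]
    (X : Ω → A) (Y : Ω → B) : condEntH μ X Y = entH μ X := by
  rw [condEntH, entH_of_subsingleton Y, sub_zero]
  exact (entH_comp_of_injective (fun ω => (X ω, Y ω)) Prod.fst_injective).symm

lemma condEntH_pair_left (X : Ω → A) (Y : Ω → B) (Z : Ω → C) :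
    condEntH μ (fun ω => (X ω, Y ω)) Z =
      condEntH μ X (fun ω => (Y ω, Z ω)) + condEntH μ Y Z := by
  have := entH_comp_of_injective (μ := μ) (fun ω => ((X ω, Y ω), Z ω))
    (Equiv.prodAssoc A B C).injective
  simp only [condEntH, Equiv.prodAssoc_apply] at this ⊢
  linarith

lemma entH_pair_eq_sum (X : Ω → A) (Y : Ω → B) :
    entH μ (fun ω => (X ω, Y ω)) = ∑ a, ∑ b, negMulLog (μ.real (X ⁻¹' {a} ∩ Y ⁻¹' {b})) := by
  rw [entH_eq_sum_measureReal, Fintype.sum_prod_type]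
  congr! 4 with a b
  ext ω
  simp

lemma entH_pair_eq_sum_entH_restrict [MeasurableSpace C] [MeasurableSingletonClass C]
    (X : Ω → A) {Z : Ω → C} (hZ : Measurable Z) :
    entH μ (fun ω => (X ω, Z ω)) = ∑ c, entH (μ.restrict (Z ⁻¹' {c})) X := by
  rw [entH_pair_eq_sum, sum_comm]
  simp only [entH_eq_sum_measureReal, measureReal_restrict_apply' (hZ (measurableSet_singleton _))]

variable [MeasurableSpace A] [MeasurableSingletonClass A]

lemma sum_measureReal_preimage_inter [IsFiniteMeasure μ] {X : Ω → A} (hX : Measurable X)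
    {s : Set Ω} (hs : MeasurableSet s) : ∑ a, μ.real (X ⁻¹' {a} ∩ s) = μ.real s := by
  simp_rw [← measureReal_restrict_apply' hs]
  rw [sum_measureReal_preimage_singleton _ fun a _ => hX (measurableSet_singleton a)]
  simp

lemma sum_measureReal_preimage_eq [IsFiniteMeasure μ] {X : Ω → A} (hX : Measurable X) :
    ∑ a, μ.real (X ⁻¹' {a}) = μ.real Set.univ := by
  simpa using sum_measureReal_preimage_inter hX MeasurableSet.univ (μ := μ)

lemma entH_comp_le [IsFiniteMeasure μ] {X : Ω → A} (hX : Measurable X) (f : A → B) :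
    entH μ (fun ω => f (X ω)) ≤ entH μ X := by
  classical
  have hfiber : ∀ b, μ.real ((fun ω => f (X ω)) ⁻¹' {b}) =
      ∑ a with f a = b, μ.real (X ⁻¹' {a}) := by
    intro b
    rw [sum_measureReal_preimage_singleton _ fun a _ => hX (measurableSet_singleton a)]
    congr 1
    ext ω
    simp
  calc entH μ (fun ω => f (X ω))
      = ∑ b, negMulLog (∑ a with f a = b, μ.real (X ⁻¹' {a})) := by
        simp only [entH_eq_sum_measureReal, hfiber]
    _ ≤ ∑ b, ∑ a with f a = b, negMulLog (μ.real (X ⁻¹' {a})) :=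
        sum_le_sum fun b _ => negMulLog_sum_le _ fun _ _ => measureReal_nonneg
    _ = entH μ X := sum_fiberwise _ _ _

variable [MeasurableSpace B] [MeasurableSingletonClass B]
  [MeasurableSpace C] [MeasurableSingletonClass C]

lemma condEntH_nonneg [IsFiniteMeasure μ] {X : Ω → A} {Y : Ω → B}
    (hX : Measurable X) (hY : Measurable Y) : 0 ≤ condEntH μ X Y :=
  sub_nonneg.2 (entH_comp_le (hX.prodMk hY) Prod.snd)

lemma entH_pair_add_negMulLog_le [IsFiniteMeasure μ] {X : Ω → A} {Y : Ω → B}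
    (hX : Measurable X) (hY : Measurable Y) :
    entH μ (fun ω => (X ω, Y ω)) + negMulLog (μ.real Set.univ) ≤ entH μ X + entH μ Y := by
  have hX_marg : ∀ a, ∑ b, μ.real (X ⁻¹' {a} ∩ Y ⁻¹' {b}) = μ.real (X ⁻¹' {a}) := fun a => by
    simp_rw [Set.inter_comm (X ⁻¹' {a})]
    exact sum_measureReal_preimage_inter hY (hX (measurableSet_singleton a))
  have hY_marg : ∀ b, ∑ a, μ.real (X ⁻¹' {a} ∩ Y ⁻¹' {b}) = μ.real (Y ⁻¹' {b}) := fun b =>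
    sum_measureReal_preimage_inter hX (hY (measurableSet_singleton b))
  have htotal : ∑ a, μ.real (X ⁻¹' {a}) = μ.real Set.univ := sum_measureReal_preimage_eq hX
  have := sum_negMulLog_add_negMulLog_sum_le (fun a b => μ.real (X ⁻¹' {a} ∩ Y ⁻¹' {b}))
    fun _ _ => measureReal_nonneg
  simp only [hX_marg, hY_marg, htotal] at this
  rwa [entH_pair_eq_sum]

lemma condEntH_pair_right_le [IsFiniteMeasure μ] {X : Ω → A} {Y : Ω → B} {Z : Ω → C}
    (hX : Measurable X) (hY : Measurable Y) (hZ : Measurable Z) :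
    condEntH μ X (fun ω => (Y ω, Z ω)) ≤ condEntH μ X Z := by
  have hZ_eq : entH μ Z = ∑ c, negMulLog ((μ.restrict (Z ⁻¹' {c})).real Set.univ) := by
    simp [entH_eq_sum_measureReal]
  have key := sum_le_sum fun c (_ : c ∈ univ) =>
    entH_pair_add_negMulLog_le (μ := μ.restrict (Z ⁻¹' {c})) hX hY
  rw [sum_add_distrib, sum_add_distrib, ← entH_pair_eq_sum_entH_restrict _ hZ,
    ← entH_pair_eq_sum_entH_restrict _ hZ, ← entH_pair_eq_sum_entH_restrict _ hZ,
    ← hZ_eq] at key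
  have chain := condEntH_pair_left (μ := μ) X Y Z
  simp only [condEntH] at chain ⊢
  linarith

lemma condEntH_le_condEntH_comp [IsFiniteMeasure μ] {X : Ω → A} {W : Ω → B}
    (hX : Measurable X) (hW : Measurable W) (f : B → C) :
    condEntH μ X W ≤ condEntH μ X (fun ω => f (W ω)) := by
  rw [← condEntH_comp_right_of_injective X W (f := fun b => (b, f b))
    (fun _ _ h => (Prod.ext_iff.1 h).1)]
  exact condEntH_pair_right_le hX hW (measurable_of_finite f |>.comp hW)

lemma entH_pair_of_indepFun [IsProbabilityMeasure μ] {X : Ω → A} {Y : Ω → B}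
    (hX : Measurable X) (hY : Measurable Y) (h : IndepFun X Y μ) :
    entH μ (fun ω => (X ω, Y ω)) = entH μ X + entH μ Y := by
  have hmul : ∀ a b, μ.real (X ⁻¹' {a} ∩ Y ⁻¹' {b}) = μ.real (X ⁻¹' {a}) * μ.real (Y ⁻¹' {b}) :=
    fun a b => by
      simp [measureReal_def, h.measure_inter_preimage_eq_mul _ _ (measurableSet_singleton a)
        (measurableSet_singleton b)]
  have hX1 : ∑ a, μ.real (X ⁻¹' {a}) = 1 := by rw [sum_measureReal_preimage_eq hX, probReal_univ]
  have hY1 : ∑ b, μ.real (Y ⁻¹' {b}) = 1 := by rw [sum_measureReal_preimage_eq hY, probReal_univ]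
  simp_rw [entH_pair_eq_sum, hmul, negMulLog_mul, sum_add_distrib, ← sum_mul, ← mul_sum, hY1]
  rw [← sum_mul, hX1]
  simp [entH_eq_sum_measureReal]

lemma entH_sub_condEntH_le_of_indepFun [IsProbabilityMeasure μ] {S : Ω → A} {P : Ω → B}
    {W : Ω → C} (hS : Measurable S) (hP : Measurable P) (hW : Measurable W)
    (h : IndepFun S P μ) :
    entH μ S - condEntH μ (fun ω => (S ω, P ω)) W ≤
      condEntH μ W P - condEntH μ W (fun ω => (S ω, P ω)) := by
  have hswap : entH μ (fun ω => ((S ω, P ω), W ω)) = entH μ (fun ω => (W ω, (S ω, P ω))) :=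
    (entH_comp_of_injective _ Prod.swap_injective).symm
  have hmono : entH μ W ≤ entH μ (fun ω => (W ω, P ω)) := entH_comp_le (hW.prodMk hP) Prod.fst
  simp only [condEntH, hswap, entH_pair_of_indepFun hS hP h]
  linarith

end Entropy

section JointOn

variable {Ω : Type*} [MeasurableSpace Ω] {μ : Measure Ω} {ι : Type*} {V : ι → Type*}

lemma measurable_jointOn [∀ i, MeasurableSpace (V i)] {X : ∀ i, Ω → V i}
    (hX : ∀ i, Measurable (X i)) (U : Finset ι) : Measurable (jointOn X U) :=
  measurable_pi_lambda _ fun i => hX i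

lemma injective_singleton_eval (m : ι) :
    Injective fun x : (i : ↥({m} : Finset ι)) → V i => x ⟨m, mem_singleton_self m⟩ := by
  intro x y h
  funext ⟨i, hi⟩
  rw [mem_singleton] at hi
  subst hi
  exact h

variable [DecidableEq ι]

lemma injective_insert_restrict (m : ι) (U : Finset ι) :
    Injective fun x : (i : ↥(insert m U)) → V i =>
      (x ⟨m, mem_insert_self m U⟩, fun i : U => x ⟨i, mem_insert_of_mem i.2⟩) := by
  intro x y h
  funext ⟨i, hi⟩
  rcases mem_insert.1 hi with rfl | hi
  · exact (Prod.ext_iff.1 h).1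
  · exact congrFun (Prod.ext_iff.1 h).2 ⟨i, hi⟩

variable [∀ i, Fintype (V i)] {K : Type*} [Fintype K]

lemma condEntH_jointOn_insert_left (X : ∀ i, Ω → V i) (m : ι) (U : Finset ι) (Y : Ω → K) :
    condEntH μ (jointOn X (insert m U)) Y = condEntH μ (fun ω => (X m ω, jointOn X U ω)) Y :=
  (condEntH_comp_left_of_injective _ Y (injective_insert_restrict m U)).symm

lemma condEntH_jointOn_insert_right (X : ∀ i, Ω → V i) (m : ι) (U : Finset ι) (Y : Ω → K) :
    condEntH μ Y (jointOn X (insert m U)) = condEntH μ Y (fun ω => (X m ω, jointOn X U ω)) :=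
  (condEntH_comp_right_of_injective Y _ (injective_insert_restrict m U)).symm

lemma entH_jointOn_singleton (X : ∀ i, Ω → V i) (m : ι) :
    entH μ (jointOn X {m}) = entH μ (X m) :=
  (entH_comp_of_injective _ (injective_singleton_eval m)).symm

end JointOn

lemma win_zero {L : ℕ} (l : Fin L) : win L l 0 = ∅ := by simp [win]

section Windows

variable {L : ℕ} [NeZero L]

lemma win_eq_image (l : Fin L) (β : ℕ) :
    win L l β = (range β).image fun k => l + Fin.ofNat L k := by
  refine image_congr fun k _ => Fin.ext ?_
  simp [Fin.val_add]

lemma win_succ (l : Fin L) (β : ℕ) :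
    win L l (β + 1) = insert (l + Fin.ofNat L β) (win L l β) := by
  rw [win_eq_image, win_eq_image, range_add_one, image_insert]

lemma win_one (l : Fin L) : win L l 1 = {l} := by simp [win_succ, win_zero]

lemma Fin.add_ofNat_add_one (l : Fin L) (k : ℕ) :
    l + Fin.ofNat L (k + 1) = l + 1 + Fin.ofNat L k := by
  simp only [Fin.ext_iff, Fin.val_add, Fin.val_ofNat, Fin.val_one', Nat.add_mod_mod,
    Nat.mod_add_mod]
  ring_nf

lemma win_add_one_subset (l : Fin L) (β : ℕ) : win L (l + 1) β ⊆ win L l (β + 1) := by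
  simp only [win_eq_image, image_subset_iff, mem_image, mem_range]
  exact fun k hk => ⟨k + 1, by omega, Fin.add_ofNat_add_one l k⟩

end Windows

lemma pre_zero (L : ℕ) : pre L 0 = ∅ := by simp [pre]

lemma pre_succ {L : ℕ} (i : Fin L) : pre L (i + 1) = insert i (pre L i) := by
  ext j
  simp [pre, Fin.ext_iff]
  omega

lemma notMem_pre {L : ℕ} (i : Fin L) : i ∉ pre L i := by simp [pre]

section SlidingWindow

variable {Ω : Type*} [MeasurableSpace Ω] {μ : Measure Ω} {L : ℕ}
  {T : Fin L → Type*} [∀ i, Fintype (T i)] {V : Fin L → Type*} [∀ i, Fintype (V i)]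
  {K : Type*} [Fintype K]

noncomputable def windowIncrement [NeZero L] (μ : Measure Ω) (X : ∀ i, Ω → V i) (Z : Ω → K)
    (γ : ℕ) : ℝ :=
  ∑ l : Fin L, condEntH μ (X (l + Fin.ofNat L γ)) fun ω => (jointOn X (win L l γ) ω, Z ω)

noncomputable def normalizedWindowEntropy (μ : Measure Ω) (S : ∀ i, Ω → T i)
    (X : ∀ i, Ω → V i) (α : ℕ) : ℝ :=
  (∑ l : Fin L, condEntH μ (jointOn X (win L l (α + 1))) (jointOn S (pre L α))) / (α + 1)

lemma normalizedWindowEntropy_zero [NeZero L] [IsProbabilityMeasure μ] (S : ∀ i, Ω → T i)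
    (X : ∀ i, Ω → V i) : normalizedWindowEntropy μ S X 0 = ∑ l, entH μ (X l) := by
  rw [normalizedWindowEntropy, Nat.cast_zero, zero_add, zero_add, div_one]
  refine sum_congr rfl fun l _ => ?_
  rw [pre_zero, condEntH_of_subsingleton_right, win_one, entH_jointOn_singleton]

lemma sum_condEntH_win_eq_sum_windowIncrement [NeZero L] (X : ∀ i, Ω → V i) (Z : Ω → K)
    (β : ℕ) :
    ∑ l, condEntH μ (jointOn X (win L l β)) Z = ∑ γ ∈ range β, windowIncrement μ X Z γ := by
  induction β with
  | zero =>
    refine sum_eq_zero fun l _ => ?_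
    rw [win_zero]
    exact condEntH_of_subsingleton_left _ _
  | succ β ih =>
    rw [sum_range_succ, ← ih, windowIncrement, ← sum_add_distrib]
    refine sum_congr rfl fun l _ => ?_
    rw [win_succ, condEntH_jointOn_insert_left, condEntH_pair_left, add_comm]

variable [∀ i, MeasurableSpace (T i)] [∀ i, MeasurableSingletonClass (T i)]
  [∀ i, MeasurableSpace (V i)] [∀ i, MeasurableSingletonClass (V i)]
  [MeasurableSpace K] [MeasurableSingletonClass K]

lemma windowIncrement_succ_le [NeZero L] [IsFiniteMeasure μ] {X : ∀ i, Ω → V i}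
    (hX : ∀ i, Measurable (X i)) {Z : Ω → K} (hZ : Measurable Z) (γ : ℕ) :
    windowIncrement μ X Z (γ + 1) ≤ windowIncrement μ X Z γ :=
  calc windowIncrement μ X Z (γ + 1)
      = ∑ l, condEntH μ (X (l + 1 + Fin.ofNat L γ))
          fun ω => (jointOn X (win L l (γ + 1)) ω, Z ω) :=
        sum_congr rfl fun l _ => by rw [Fin.add_ofNat_add_one]
    _ ≤ ∑ l, condEntH μ (X (l + 1 + Fin.ofNat L γ))
          fun ω => (jointOn X (win L (l + 1) γ) ω, Z ω) :=
        sum_le_sum fun l _ => condEntH_le_condEntH_comp (hX _)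
          ((measurable_jointOn hX _).prodMk hZ)
          fun p => (fun i : win L (l + 1) γ => p.1 ⟨i, win_add_one_subset l γ i.2⟩, p.2)
    _ = windowIncrement μ X Z γ := Equiv.sum_comp (Equiv.addRight 1)
          fun l => condEntH μ (X (l + Fin.ofNat L γ)) fun ω => (jointOn X (win L l γ) ω, Z ω)

lemma sum_condEntH_win_han [NeZero L] [IsFiniteMeasure μ] {X : ∀ i, Ω → V i}
    (hX : ∀ i, Measurable (X i)) {Z : Ω → K} (hZ : Measurable Z) (n : ℕ) :
    (n + 1 : ℝ) * ∑ l, condEntH μ (jointOn X (win L l (n + 2))) Z ≤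
      (n + 2) * ∑ l, condEntH μ (jointOn X (win L l (n + 1))) Z := by
  simp only [sum_condEntH_win_eq_sum_windowIncrement]
  exact (antitone_nat_of_succ_le (windowIncrement_succ_le hX hZ)).mul_sum_range_succ_le n

lemma normalizedWindowEntropy_nonneg [IsFiniteMeasure μ] {S : ∀ i, Ω → T i}
    (hS : ∀ i, Measurable (S i)) {X : ∀ i, Ω → V i} (hX : ∀ i, Measurable (X i)) (α : ℕ) :
    0 ≤ normalizedWindowEntropy μ S X α :=
  div_nonneg (sum_nonneg fun _ _ =>
    condEntH_nonneg (measurable_jointOn hX _) (measurable_jointOn hS _)) (by positivity)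

lemma entH_sub_add_condEntH_pre_succ_le [IsProbabilityMeasure μ] {S : ∀ i, Ω → T i}
    (hS : ∀ i, Measurable (S i)) (hindep : iIndepFun S μ) (i : Fin L) {W : Ω → K}
    (hW : Measurable W) {δ : ℝ} (hrec : condEntH μ (jointOn S (pre L (i + 1))) W ≤ δ) :
    entH μ (S i) - δ + condEntH μ W (jointOn S (pre L (i + 1))) ≤
      condEntH μ W (jointOn S (pre L i)) := by
  have hind : IndepFun (S i) (jointOn S (pre L i)) μ :=
    (hindep.indepFun_finset {i} (pre L i) (disjoint_singleton_left.2 (notMem_pre i)) hS).comp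
      (measurable_pi_apply (⟨i, mem_singleton_self i⟩ : ({i} : Finset (Fin L)))) measurable_id
  rw [pre_succ, condEntH_jointOn_insert_left] at hrec
  rw [pre_succ, condEntH_jointOn_insert_right]
  have := entH_sub_condEntH_le_of_indepFun (hS i) (measurable_jointOn hS _) hW hind
  linarith

lemma mul_entH_sub_div_le_normalizedWindowEntropy_sub [NeZero L] [IsProbabilityMeasure μ]
    {S : ∀ i, Ω → T i} (hS : ∀ i, Measurable (S i)) (hindep : iIndepFun S μ)
    {X : ∀ i, Ω → V i} (hX : ∀ i, Measurable (X i)) (i : Fin L) {δ : ℝ}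
    (hrec : ∀ l, condEntH μ (jointOn S (pre L (i + 1))) (jointOn X (win L l (i + 1))) ≤ δ) :
    L * ((entH μ (S i) - δ) / (i + 1)) ≤
      normalizedWindowEntropy μ S X i - normalizedWindowEntropy μ S X (i + 1) := by
  have hextract := sum_le_sum fun l (_ : l ∈ univ) =>
    entH_sub_add_condEntH_pre_succ_le hS hindep i (measurable_jointOn hX _) (hrec l)
  rw [sum_add_distrib, sum_const, card_univ, Fintype.card_fin, nsmul_eq_mul] at hextract
  have hhan := sum_condEntH_win_han (μ := μ) hX (measurable_jointOn hS (pre L (i + 1))) i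
  have hi : (0 : ℝ) < i + 1 := by positivity
  rw [normalizedWindowEntropy, normalizedWindowEntropy, le_sub_iff_add_le]
  push_cast
  calc _ ≤ (L * (entH μ (S i) - δ) +
        ∑ l, condEntH μ (jointOn X (win L l (i + 1))) (jointOn S (pre L (i + 1)))) / (i + 1) := by
        rw [add_div, mul_div_assoc, add_le_add_iff_left, div_le_div_iff₀ (by positivity) hi]
        linarith
    _ ≤ _ := div_le_div_of_nonneg_right hextract hi.le

end SlidingWindow

theorem smdc_sum_rate_converse_sliding_window_general
    {Ω : Type*} [MeasurableSpace Ω] (μ : Measure Ω) [IsProbabilityMeasure μ]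
    {L : ℕ}
    {T : Fin L → Type*} [∀ i, Fintype (T i)] [∀ i, MeasurableSpace (T i)]
    [∀ i, MeasurableSingletonClass (T i)]
    {V : Fin L → Type*} [∀ i, Fintype (V i)] [∀ i, MeasurableSpace (V i)]
    [∀ i, MeasurableSingletonClass (V i)]
    (S : ∀ i, Ω → T i) (hS : ∀ i, Measurable (S i))
    (hindep : iIndepFun S μ)
    (X : ∀ i, Ω → V i) (hX : ∀ i, Measurable (X i))
    (δ : Fin L → ℝ)
    (hrec : ∀ i : Fin L, ∀ l : Fin L,
      condEntH μ (jointOn S (pre L ((i : ℕ) + 1))) (jointOn X (win L l ((i : ℕ) + 1))) ≤ δ i) :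
    (1 / (L : ℝ)) * ∑ l : Fin L, entH μ (X l) ≥
      ∑ i : Fin L, entH μ (S i) / ((i : ℕ) + 1 : ℝ) -
        ∑ i : Fin L, δ i / ((i : ℕ) + 1 : ℝ) := by
  rcases eq_zero_or_neZero L with rfl | _
  · simp
  have hstep := sum_le_sum fun i (_ : i ∈ univ) =>
    mul_entH_sub_div_le_normalizedWindowEntropy_sub hS hindep hX i (hrec i)
  rw [← mul_sum, Fin.sum_univ_eq_sum_range
    (fun i => normalizedWindowEntropy μ S X i - normalizedWindowEntropy μ S X (i + 1)),
    sum_range_sub', normalizedWindowEntropy_zero] at hstep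
  have hlast := normalizedWindowEntropy_nonneg (μ := μ) hS hX L
  rw [ge_iff_le, ← sum_sub_distrib, one_div_mul_eq_div, le_div_iff₀ (Nat.cast_pos.2 (NeZero.pos L))]
  simp_rw [← sub_div]
  linarith

/-- **Sum-rate converse for SMDC under the weakened sliding-window reconstruction
requirement**: if `H(S_1,…,S_α | X_{W_l^{(α)}}) ≤ δ_α` for every `α` and every sliding window,
then `(1/L) ∑_l H(X_l) ≥ ∑_α H(S_α)/α − ∑_α δ_α/α`.  Here the source/rate index `i : Fin L`
corresponds to the paper's index `α = i + 1`. -/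
theorem smdc_sum_rate_converse_sliding_window
    {Ω : Type*} [MeasurableSpace Ω] (μ : Measure Ω) [IsProbabilityMeasure μ]
    {L : ℕ} (hL : 1 ≤ L)
    {T : Fin L → Type*} [∀ i, Fintype (T i)] [∀ i, MeasurableSpace (T i)]
    [∀ i, MeasurableSingletonClass (T i)]
    {V : Fin L → Type*} [∀ i, Fintype (V i)] [∀ i, MeasurableSpace (V i)]
    [∀ i, MeasurableSingletonClass (V i)]
    (S : ∀ i, Ω → T i) (hS : ∀ i, Measurable (S i))
    (hindep : iIndepFun S μ)
    (X : ∀ i, Ω → V i) (hX : ∀ i, Measurable (X i))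
    (δ : Fin L → ℝ) (hδ : ∀ i, 0 ≤ δ i)
    (hrec : ∀ i : Fin L, ∀ l : Fin L,
      condEntH μ (jointOn S (pre L ((i : ℕ) + 1))) (jointOn X (win L l ((i : ℕ) + 1))) ≤ δ i) :
    (1 / (L : ℝ)) * ∑ l : Fin L, entH μ (X l) ≥
      ∑ i : Fin L, entH μ (S i) / ((i : ℕ) + 1 : ℝ) -
        ∑ i : Fin L, δ i / ((i : ℕ) + 1 : ℝ) :=
  smdc_sum_rate_converse_sliding_window_general μ S hS hindep X hX δ hrec
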